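/- Let H be a complex Hilbert space, A a positive bounded operator, T, S bounded operators admitting A-adjoints, with α ∈ [0,1] and β ≥ 0. Then w_A(S^♯T)⁴ ≤ ((1+α+2β)/(8(1+β))) ‖(T^♯T)² + (S^♯S)²‖_A² + ((1−α)/(2(1+β))) w_A(S^♯S·T^♯T)². -/

import Mathlib

/-!
With `M = T^♯T` and `Z = S^♯S`, Cauchy–Schwarz gives
`|⟪S^♯T x, x⟫_A|² = |⟪T x, S x⟫_A|² ≤ ⟪M x, x⟫_A ⟪x, Z x⟫_A`. Buzano's inequality
`2 |⟪a, e⟫_A ⟪e, b⟫_A| ≤ ‖a‖_A ‖b‖_A + |⟪a, b⟫_A|` for `‖e‖_A = 1`, squared and combined with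
`|⟪a, b⟫_A| ≤ ‖a‖_A ‖b‖_A`, bounds the square of the right-hand side, for `a = M x`, `b = Z x`,
`e = x`, by a convex combination of `(‖M x‖_A ‖Z x‖_A)²` and `|⟪M x, Z x⟫_A|²`. Finally
`2 ‖M x‖_A ‖Z x‖_A ≤ ‖M x‖_A² + ‖Z x‖_A² = re ⟪(M² + Z²) x, x⟫_A ≤ ‖M² + Z²‖_A` and
`|⟪M x, Z x⟫_A| = |⟪Z M x, x⟫_A| ≤ w_A(Z M)`; both suprema are finite because an
`A`-selfadjoint operator `B` satisfies `‖B x‖_A ≤ ‖B‖` whenever `‖x‖_A = 1`.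
-/

open scoped InnerProductSpace

variable {H : Type*} [NormedAddCommGroup H] [InnerProductSpace ℂ H] [CompleteSpace H]

/-- The `A`-semi-inner product `⟪x, y⟫_A = ⟪A x, y⟫`. -/
noncomputable def ipA (A : H →L[ℂ] H) (x y : H) : ℂ := ⟪A x, y⟫_ℂ

/-- The `A`-semi-norm `‖x‖_A = √(re ⟪A x, x⟫)`. -/
noncomputable def nA (A : H →L[ℂ] H) (x : H) : ℝ := Real.sqrt (ipA A x x).re

/-- The `A`-numerical radius. -/
noncomputable def wA (A T : H →L[ℂ] H) : ℝ :=
  sSup {c : ℝ | ∃ x : H, nA A x = 1 ∧ c = ‖ipA A (T x) x‖}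

/-- The `A`-operator seminorm. -/
noncomputable def opA (A T : H →L[ℂ] H) : ℝ :=
  sSup {c : ℝ | ∃ x : H, nA A x = 1 ∧ c = nA A (T x)}

section SemiInnerProduct

omit [CompleteSpace H]

variable {A : H →L[ℂ] H}

theorem ipA_add_left (x y z : H) : ipA A (x + y) z = ipA A x z + ipA A y z := by
  simp [ipA]

theorem ipA_add_right (x y z : H) : ipA A x (y + z) = ipA A x y + ipA A x z := by
  simp [ipA]

theorem nA_nonneg (x : H) : 0 ≤ nA A x := Real.sqrt_nonneg _

theorem ipA_conj_symm (hA : A.IsPositive) (x y : H) : starRingEnd ℂ (ipA A y x) = ipA A x y := by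
  rw [ipA, ipA, inner_conj_symm]
  exact (hA.isSymmetric x y).symm

theorem ipA_self_re_nonneg (hA : A.IsPositive) (x : H) : 0 ≤ (ipA A x x).re :=
  (Complex.le_def.mp (hA.inner_nonneg_left x)).1

@[reducible] noncomputable def ipACore (hA : A.IsPositive) : PreInnerProductSpace.Core ℂ H where
  inner := ipA A
  conj_inner_symm := ipA_conj_symm hA
  re_inner_nonneg := ipA_self_re_nonneg hA
  add_left x y z := by simp [ipA]
  smul_left x y r := by simp [ipA, mul_comm]

theorem norm_ipA_le_nA_mul_nA (hA : A.IsPositive) (x y : H) :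
    ‖ipA A x y‖ ≤ nA A x * nA A y :=
  InnerProductSpace.Core.norm_inner_le_norm (c := ipACore hA) x y

theorem nA_sq (hA : A.IsPositive) (x : H) : nA A x ^ 2 = (ipA A x x).re :=
  Real.sq_sqrt (ipA_self_re_nonneg hA x)

theorem ipA_self_eq_nA_sq (hA : A.IsPositive) (x : H) : ipA A x x = (nA A x ^ 2 : ℝ) := by
  have him : (ipA A x x).im = 0 := by
    have h := congrArg Complex.im (ipA_conj_symm hA x x)
    rw [Complex.conj_im] at h
    linarith
  rw [nA_sq hA]
  exact Complex.ext rfl him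

theorem nA_le_sqrt_norm_mul_norm (y : H) : nA A y ≤ √‖A‖ * ‖y‖ := by
  rw [← Real.sqrt_sq (norm_nonneg y), ← Real.sqrt_mul (norm_nonneg A)]
  refine Real.sqrt_le_sqrt ?_
  calc (ipA A y y).re ≤ ‖A y‖ * ‖y‖ := (Complex.re_le_norm _).trans (norm_inner_le_norm _ _)
    _ ≤ ‖A‖ * ‖y‖ ^ 2 := by
      rw [sq, ← mul_assoc]
      exact mul_le_mul_of_nonneg_right (A.le_opNorm y) (norm_nonneg y)

theorem ipA_adjoint_left (hA : A.IsPositive) {T Ts : H →L[ℂ] H}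
    (hadj : ∀ x y : H, ipA A (T x) y = ipA A x (Ts y)) (x y : H) :
    ipA A (Ts x) y = ipA A x (T y) := by
  rw [← ipA_conj_symm hA, ← hadj, ipA_conj_symm hA]

theorem two_mul_norm_ipA_mul_ipA_le (hA : A.IsPositive) {e : H} (he : nA A e = 1) (a b : H) :
    2 * ‖ipA A a e * ipA A e b‖ ≤ nA A a * nA A b + ‖ipA A a b‖ := by
  set c := ipA A e b with hc
  -- Buzano's inequality: the reflection `w` of `b` in the line through `e` has the same
  -- `A`-seminorm as `b`, and `⟪a, w⟫_A = 2 ⟪a, e⟫_A ⟪e, b⟫_A - ⟪a, b⟫_A`.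
  set w := (2 * c) • e - b
  have hw : nA A w = nA A b := by
    have hee : ipA A e e = 1 := by rw [ipA_self_eq_nA_sq hA, he]; norm_num
    have hbe : ipA A b e = starRingEnd ℂ c := (ipA_conj_symm hA b e).symm
    have hww : ipA A w w = ipA A b b := by
      simp only [w, ipA, map_sub, map_smul, inner_sub_left, inner_sub_right, inner_smul_left,
        inner_smul_right] at hee hbe hc ⊢
      rw [hee, hbe, ← hc]
      simp only [map_mul, map_ofNat]
      ring
    rw [nA, nA, hww]
  have haw : ipA A a w = 2 * (ipA A a e * c) - ipA A a b := by
    simp only [w, ipA, inner_sub_right, inner_smul_right]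
    ring
  calc 2 * ‖ipA A a e * c‖ = ‖2 * (ipA A a e * c)‖ := by simp
    _ ≤ ‖ipA A a w‖ + ‖ipA A a b‖ := by
      rw [haw]
      exact sub_le_iff_le_add.mp (norm_sub_norm_le _ _)
    _ ≤ nA A a * nA A b + ‖ipA A a b‖ := by
      rw [← hw]
      gcongr
      exact norm_ipA_le_nA_mul_nA hA a w

theorem add_div_two_sq_le {n v s : ℝ} (hv : 0 ≤ v) (hvn : v ≤ n) (hs : 1 / 2 ≤ s) :
    ((n + v) / 2) ^ 2 ≤ s * n ^ 2 + (1 - s) * v ^ 2 := by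
  have hnv : 0 ≤ n + v := by linarith
  nlinarith [mul_nonneg (sub_nonneg.2 hs) (mul_nonneg (sub_nonneg.2 hvn) hnv), sq_nonneg (n - v)]

theorem norm_ipA_mul_ipA_sq_le (hA : A.IsPositive) {e : H} (he : nA A e = 1) (a b : H)
    {α β : ℝ} (hα : 0 ≤ α) (hβ : 0 ≤ β) :
    ‖ipA A a e * ipA A e b‖ ^ 2 ≤
      (1 + α + 2 * β) / (2 * (1 + β)) * (nA A a * nA A b) ^ 2 +
        (1 - α) / (2 * (1 + β)) * ‖ipA A a b‖ ^ 2 := by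
  have hs : 1 / 2 ≤ (1 + α + 2 * β) / (2 * (1 + β)) := by
    rw [le_div_iff₀ (by positivity)]
    linarith
  have ht : (1 - α) / (2 * (1 + β)) = 1 - (1 + α + 2 * β) / (2 * (1 + β)) := by
    field_simp
    ring
  rw [ht]
  refine le_trans ?_ (add_div_two_sq_le (norm_nonneg _) (norm_ipA_le_nA_mul_nA hA a b) hs)
  gcongr
  linarith [two_mul_norm_ipA_mul_ipA_le hA he a b]

end SemiInnerProduct

theorem le_of_forall_pow_two_pow_le_mul_pow {a b K : ℝ} (hb : 0 ≤ b)
    (h : ∀ n : ℕ, a ^ 2 ^ n ≤ K * b ^ 2 ^ n) : a ≤ b := by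
  by_contra! hba
  rcases hb.eq_or_lt with rfl | hb
  · have h0 := h 0
    norm_num at h0
    linarith
  have hr : 1 < a / b := (one_lt_div hb).2 hba
  obtain ⟨m, hm⟩ := pow_unbounded_of_one_lt K hr
  have hK : (a / b) ^ 2 ^ m ≤ K := by
    rw [div_pow, div_le_iff₀ (by positivity)]
    exact h m
  exact (hm.trans_le (pow_le_pow_right₀ hr.le Nat.lt_two_pow_self.le)).not_ge hK

section SymmetricA

omit [CompleteSpace H]

def IsSymmetricA (A B : H →L[ℂ] H) : Prop :=
  ∀ x y : H, ipA A (B x) y = ipA A x (B y)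

variable {A B C : H →L[ℂ] H}

theorem isSymmetricA_adjoint_comp (hA : A.IsPositive) {T Ts : H →L[ℂ] H}
    (hadj : ∀ x y : H, ipA A (T x) y = ipA A x (Ts y)) : IsSymmetricA A (Ts ∘L T) := fun x y => by
  rw [ContinuousLinearMap.comp_apply, ContinuousLinearMap.comp_apply, ipA_adjoint_left hA hadj,
    hadj]

namespace IsSymmetricA

theorem add (hB : IsSymmetricA A B) (hC : IsSymmetricA A C) : IsSymmetricA A (B + C) :=
  fun x y => by
    rw [add_apply, add_apply, ipA_add_left, ipA_add_right, hB, hC]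

theorem comp_self (hB : IsSymmetricA A B) : IsSymmetricA A (B ∘L B) :=
  fun x y => (hB (B x) y).trans (hB x (B y))

theorem pow (hB : IsSymmetricA A B) (k : ℕ) : IsSymmetricA A (B ^ k) := by
  induction k with
  | zero => intro x y; rfl
  | succ k ih =>
    intro x y
    calc ipA A ((B ^ (k + 1)) x) y = ipA A ((B ^ k) (B x)) y := by rw [pow_succ]; rfl
      _ = ipA A x (B ((B ^ k) y)) := by rw [ih, hB]
      _ = ipA A x ((B ^ (k + 1)) y) := by rw [pow_succ']; rfl

theorem nA_apply_sq_le (hA : A.IsPositive) (hB : IsSymmetricA A B) (x : H) :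
    nA A (B x) ^ 2 ≤ nA A (B (B x)) * nA A x :=
  calc nA A (B x) ^ 2 = (ipA A (B (B x)) x).re := by rw [nA_sq hA, ← hB]
    _ ≤ ‖ipA A (B (B x)) x‖ := Complex.re_le_norm _
    _ ≤ nA A (B (B x)) * nA A x := norm_ipA_le_nA_mul_nA hA _ _

theorem nA_apply_pow_le (hA : A.IsPositive) (hB : IsSymmetricA A B) {x : H} (hx : nA A x = 1)
    (n : ℕ) : nA A (B x) ^ 2 ^ n ≤ nA A ((B ^ 2 ^ n) x) := by
  induction n with
  | zero => simp
  | succ n ih =>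
    calc nA A (B x) ^ 2 ^ (n + 1) = (nA A (B x) ^ 2 ^ n) ^ 2 := by rw [pow_succ, pow_mul]
      _ ≤ nA A ((B ^ 2 ^ n) x) ^ 2 := pow_le_pow_left₀ (pow_nonneg (nA_nonneg _) _) ih 2
      _ ≤ nA A ((B ^ 2 ^ n) ((B ^ 2 ^ n) x)) * nA A x := (hB.pow _).nA_apply_sq_le hA x
      _ = nA A ((B ^ 2 ^ (n + 1)) x) := by rw [hx, mul_one, pow_succ, pow_mul, sq]; rfl

-- Spectral radius trick: `‖B x‖_A ^ 2 ^ n ≤ ‖B ^ 2 ^ n x‖_A ≤ √‖A‖ ‖x‖ ‖B‖ ^ 2 ^ n` for all `n`.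
theorem nA_apply_le_opNorm (hA : A.IsPositive) (hB : IsSymmetricA A B) {x : H}
    (hx : nA A x = 1) : nA A (B x) ≤ ‖B‖ := by
  refine le_of_forall_pow_two_pow_le_mul_pow (K := √‖A‖ * ‖x‖) (norm_nonneg B) fun n => ?_
  calc nA A (B x) ^ 2 ^ n ≤ nA A ((B ^ 2 ^ n) x) := hB.nA_apply_pow_le hA hx n
    _ ≤ √‖A‖ * ‖(B ^ 2 ^ n) x‖ := nA_le_sqrt_norm_mul_norm _
    _ ≤ √‖A‖ * (‖B‖ ^ 2 ^ n * ‖x‖) := by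
      gcongr
      exact ((B ^ 2 ^ n).le_opNorm x).trans
        (mul_le_mul_of_nonneg_right (norm_pow_le' B (by positivity)) (norm_nonneg x))
    _ = √‖A‖ * ‖x‖ * ‖B‖ ^ 2 ^ n := by ring

theorem nA_apply_le_opA (hA : A.IsPositive) (hB : IsSymmetricA A B) {x : H} (hx : nA A x = 1) :
    nA A (B x) ≤ opA A B :=
  le_csSup ⟨‖B‖, by rintro _ ⟨y, hy, rfl⟩; exact hB.nA_apply_le_opNorm hA hy⟩ ⟨x, hx, rfl⟩

end IsSymmetricA

end SymmetricA

section NumericalRadius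

omit [CompleteSpace H]

variable {A B M Z : H →L[ℂ] H}

theorem wA_pow_le {n : ℕ} (hn : n ≠ 0) {C : ℝ} (hC : 0 ≤ C)
    (h : ∀ x : H, nA A x = 1 → ‖ipA A (B x) x‖ ^ n ≤ C) : wA A B ^ n ≤ C := by
  have hw : wA A B ≤ C ^ (n⁻¹ : ℝ) := by
    refine Real.sSup_le ?_ (by positivity)
    rintro _ ⟨x, hx, rfl⟩
    rw [← Real.pow_rpow_inv_natCast (norm_nonneg _) hn]
    exact Real.rpow_le_rpow (by positivity) (h x hx) (by positivity)
  have hw0 : 0 ≤ wA A B := Real.sSup_nonneg (by rintro _ ⟨x, -, rfl⟩; exact norm_nonneg _)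
  calc wA A B ^ n ≤ (C ^ (n⁻¹ : ℝ)) ^ n := pow_le_pow_left₀ hw0 hw n
    _ = C := Real.rpow_inv_natCast_pow hC hn

theorem two_mul_nA_mul_nA_le_opA (hA : A.IsPositive) (hM : IsSymmetricA A M)
    (hZ : IsSymmetricA A Z) {x : H} (hx : nA A x = 1) :
    2 * (nA A (M x) * nA A (Z x)) ≤ opA A (M ∘L M + Z ∘L Z) :=
  calc
    2 * (nA A (M x) * nA A (Z x)) ≤ nA A (M x) ^ 2 + nA A (Z x) ^ 2 := by
      linarith [two_mul_le_add_sq (nA A (M x)) (nA A (Z x))]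
    _ = (ipA A ((M ∘L M + Z ∘L Z) x) x).re := by
      rw [nA_sq hA, nA_sq hA, add_apply, ipA_add_left, Complex.add_re,
        ContinuousLinearMap.comp_apply, ContinuousLinearMap.comp_apply, ← hM, ← hZ]
    _ ≤ ‖ipA A ((M ∘L M + Z ∘L Z) x) x‖ := Complex.re_le_norm _
    _ ≤ nA A ((M ∘L M + Z ∘L Z) x) := by
      simpa [hx] using norm_ipA_le_nA_mul_nA hA ((M ∘L M + Z ∘L Z) x) x
    _ ≤ opA A (M ∘L M + Z ∘L Z) := (hM.comp_self.add hZ.comp_self).nA_apply_le_opA hA hx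

theorem norm_ipA_le_wA_comp (hA : A.IsPositive) (hM : IsSymmetricA A M) (hZ : IsSymmetricA A Z)
    {x : H} (hx : nA A x = 1) : ‖ipA A (M x) (Z x)‖ ≤ wA A (Z ∘L M) := by
  have hZM : ∀ y : H, ipA A ((Z ∘L M) y) y = ipA A (M y) (Z y) := fun y => hZ (M y) y
  refine hZM x ▸ le_csSup ⟨opA A (M ∘L M + Z ∘L Z) / 2, ?_⟩ ⟨x, hx, rfl⟩
  rintro _ ⟨y, hy, rfl⟩
  rw [hZM, le_div_iff₀ two_pos, mul_comm]
  exact (mul_le_mul_of_nonneg_left (norm_ipA_le_nA_mul_nA hA _ _) two_pos.le).trans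
    (two_mul_nA_mul_nA_le_opA hA hM hZ hy)

theorem norm_ipA_adjoint_comp_sq_le (hA : A.IsPositive) {T Ts S Ss : H →L[ℂ] H}
    (hadjT : ∀ x y : H, ipA A (T x) y = ipA A x (Ts y))
    (hadjS : ∀ x y : H, ipA A (S x) y = ipA A x (Ss y)) (x : H) :
    ‖ipA A ((Ss ∘L T) x) x‖ ^ 2 ≤ ‖ipA A ((Ts ∘L T) x) x * ipA A x ((Ss ∘L S) x)‖ := by
  simp only [ContinuousLinearMap.comp_apply]
  rw [ipA_adjoint_left hA hadjS, ipA_adjoint_left hA hadjT,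
    ← hadjS, ipA_self_eq_nA_sq hA, ipA_self_eq_nA_sq hA, ← Complex.ofReal_mul, Complex.norm_real,
    Real.norm_of_nonneg (by positivity), ← mul_pow]
  exact pow_le_pow_left₀ (norm_nonneg _) (norm_ipA_le_nA_mul_nA hA _ _) 2

end NumericalRadius

theorem stmt17 (A : H →L[ℂ] H) (hA : A.IsPositive) (T Ts S Ss : H →L[ℂ] H)
    (hadjT : ∀ x y : H, ipA A (T x) y = ipA A x (Ts y))
    (hadjS : ∀ x y : H, ipA A (S x) y = ipA A x (Ss y))
    (α β : ℝ) (hα : α ∈ Set.Icc (0 : ℝ) 1) (hβ : 0 ≤ β) :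
    wA A (Ss ∘L T) ^ 4 ≤
      ((1 + α + 2 * β) / (8 * (1 + β))) *
          opA A ((Ts ∘L T) ∘L (Ts ∘L T) + (Ss ∘L S) ∘L (Ss ∘L S)) ^ 2 +
        ((1 - α) / (2 * (1 + β))) * wA A ((Ss ∘L S) ∘L (Ts ∘L T)) ^ 2 := by
  obtain ⟨hα0, hα1⟩ := hα
  have hM := isSymmetricA_adjoint_comp hA hadjT
  have hZ := isSymmetricA_adjoint_comp hA hadjS
  set M := Ts ∘L T
  set Z := Ss ∘L S
  have ht : 0 ≤ (1 - α) / (2 * (1 + β)) := div_nonneg (by linarith) (by positivity)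
  refine wA_pow_le four_ne_zero (add_nonneg (by positivity) (mul_nonneg ht (sq_nonneg _)))
    fun x hx => ?_
  have hMZ := two_mul_nA_mul_nA_le_opA hA hM hZ hx
  calc ‖ipA A ((Ss ∘L T) x) x‖ ^ 4 = (‖ipA A ((Ss ∘L T) x) x‖ ^ 2) ^ 2 := by ring
    _ ≤ ‖ipA A (M x) x * ipA A x (Z x)‖ ^ 2 := by
      gcongr
      exact norm_ipA_adjoint_comp_sq_le hA hadjT hadjS x
    _ ≤ (1 + α + 2 * β) / (2 * (1 + β)) * (nA A (M x) * nA A (Z x)) ^ 2 +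
          (1 - α) / (2 * (1 + β)) * ‖ipA A (M x) (Z x)‖ ^ 2 :=
      norm_ipA_mul_ipA_sq_le hA hx _ _ hα0 hβ
    _ ≤ (1 + α + 2 * β) / (2 * (1 + β)) * (opA A (M ∘L M + Z ∘L Z) / 2) ^ 2 +
          (1 - α) / (2 * (1 + β)) * wA A (Z ∘L M) ^ 2 := by
      gcongr
      · exact mul_nonneg (nA_nonneg _) (nA_nonneg _)
      · linarith
      · exact norm_ipA_le_wA_comp hA hM hZ hx
    _ = _ := by
      field_simp
      ring
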